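/- Let 0 < q < 1 and let (k,l,m) be an admissible triple with k = l + m − 2r, 0 ≤ r ≤ min(l,m). Then θ_q(k,l,m) > 0 and moreover [r+1]_q · [k+1]_q / θ_q(k,l,m) ≥ 1. -/
import Mathlib


/-- The quantum integer [n]_q = (q^{-n} - q^n)/(q^{-1} - q), with [0]_q = 0. -/
noncomputable def qint (q : ℝ) (n : ℕ) : ℝ :=
  (q ^ (-(n : ℤ)) - q ^ (n : ℤ)) / (q⁻¹ - q)

/-- The quantum factorial [n]_q!. -/
noncomputable def qfact (q : ℝ) (n : ℕ) : ℝ :=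
  ∏ i ∈ Finset.range n, qint q (i + 1)

/-- The theta-net θ_q(k,l,m) where k = l + m - 2r. -/
noncomputable def qtheta (q : ℝ) (k l m r : ℕ) : ℝ :=
  (qfact q r * qfact q (l - r) * qfact q (m - r) * qfact q (k + r + 1)) /
    (qfact q l * qfact q m * qfact q k)

set_option linter.unusedSectionVars false

section
variable {q : ℝ} (h0 : 0 < q) (h1 : q < 1)
include h0 h1

lemma denom_pos : 0 < q⁻¹ - q := by
  have : 1 < q⁻¹ := (one_lt_inv₀ h0).mpr h1
  nlinarith

lemma qint_pos {n : ℕ} (hn : 0 < n) : 0 < qint q n := by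
  apply div_pos _ (denom_pos h0 h1)
  have : (-(n:ℤ)) < (n:ℤ) := by omega
  linarith [zpow_lt_zpow_right_of_lt_one₀ h0 h1 this]

lemma qint_nonneg (n : ℕ) : 0 ≤ qint q n := by
  rcases Nat.eq_zero_or_pos n with h | h
  · simp [h, qint]
  · exact (qint_pos h0 h1 h).le

lemma qfact_pos (n : ℕ) : 0 < qfact q n := by
  apply Finset.prod_pos
  intro i _
  exact qint_pos h0 h1 (Nat.succ_pos i)

lemma qint_one : qint q 1 = 1 := by
  have h := denom_pos h0 h1
  simp only [qint, Nat.cast_one, zpow_one, zpow_neg_one]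
  rw [div_self (denom_pos h0 h1).ne']

-- aux: for 0 < A ≤ B ≤ 1, B + B⁻¹ ≤ A + A⁻¹
lemma aux_inv (A B : ℝ) (hA : 0 < A) (hAB : A ≤ B) (hB : B ≤ 1) :
    B + B⁻¹ ≤ A + A⁻¹ := by
  have hB0 : 0 < B := lt_of_lt_of_le hA hAB
  rw [← sub_nonneg]
  have key : A + A⁻¹ - (B + B⁻¹) = (B - A) * (1 - A * B) / (A * B) := by
    field_simp
    ring
  rw [key]
  have h1 : 0 ≤ B - A := by linarith
  have h2 : 0 ≤ 1 - A * B := by nlinarith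
  positivity

end

section
variable {q : ℝ} (h0 : 0 < q) (h1 : q < 1)
include h0 h1

lemma expand_prod (m n : ℤ) (hq : q ≠ 0) :
    (q ^ (-m) - q ^ m) * (q ^ (-n) - q ^ n)
      = q ^ (-(m + n)) + q ^ (m + n) - (q ^ (n - m) + q ^ (m - n)) := by
  rw [zpow_neg, zpow_neg, zpow_neg, zpow_add₀ hq, zpow_sub₀ hq, zpow_sub₀ hq]
  have hm : q ^ m ≠ 0 := zpow_ne_zero m hq
  have hn : q ^ n ≠ 0 := zpow_ne_zero n hq
  field_simp
  ring

lemma core (a b c d : ℤ) (hac : a ≤ c) (hcd : c ≤ d) (hsum : a + b = c + d) :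
    (q ^ (-a) - q ^ a) * (q ^ (-b) - q ^ b)
      ≤ (q ^ (-c) - q ^ c) * (q ^ (-d) - q ^ d) := by
  have hq : q ≠ 0 := h0.ne'
  have hdb : d ≤ b := by omega
  set u : ℤ := b - a with hu
  set v : ℤ := d - c with hv
  have hv0 : (0:ℤ) ≤ v := by omega
  have hvu : v ≤ u := by omega
  have hA : (0:ℝ) < q ^ u := zpow_pos h0 u
  have hAB : q ^ u ≤ q ^ v := zpow_le_zpow_right_of_le_one₀ h0 h1.le hvu
  have hB1 : q ^ v ≤ 1 := by
    have := zpow_le_zpow_right_of_le_one₀ h0 h1.le hv0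
    simpa using this
  have haux := aux_inv h0 h1 (q ^ u) (q ^ v) hA hAB hB1
  rw [expand_prod h0 h1 a b hq, expand_prod h0 h1 c d hq]
  have e1 : q ^ (a - b) = (q ^ u)⁻¹ := by rw [← zpow_neg]; congr 1; omega
  have e2 : q ^ (c - d) = (q ^ v)⁻¹ := by rw [← zpow_neg]; congr 1; omega
  have e3 : b - a = u := rfl
  have e4 : d - c = v := rfl
  rw [e1, e2, e3, e4, hsum]
  linarith

lemma qint_mul_le (s t x y : ℕ) (hsx : s ≤ x) (hsy : s ≤ y) (hsum : s + t = x + y) :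
    qint q s * qint q t ≤ qint q x * qint q y := by
  have hD : 0 < (q⁻¹ - q) * (q⁻¹ - q) := mul_pos (denom_pos h0 h1) (denom_pos h0 h1)
  simp only [qint, div_mul_div_comm]
  rw [div_le_div_iff_of_pos_right hD]
  rcases le_total x y with h | h
  · exact core h0 h1 s t x y (by exact_mod_cast hsx) (by exact_mod_cast h) (by push_cast; omega)
  · rw [mul_comm (q ^ (-(x:ℤ)) - _)]
    exact core h0 h1 s t y x (by exact_mod_cast hsy) (by exact_mod_cast h) (by push_cast; omega)

end

lemma qfact_succ (q : ℝ) (n : ℕ) : qfact q (n + 1) = qfact q n * qint q (n + 1) := by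
  rw [qfact, Finset.prod_range_succ]; rfl

lemma qfact_add (q : ℝ) (a r : ℕ) :
    qfact q (a + r) = qfact q a * ∏ i ∈ Finset.range r, qint q (a + i + 1) := by
  induction r with
  | zero => simp
  | succ n ih =>
      rw [← Nat.add_assoc, qfact_succ, ih, Finset.prod_range_succ, ← mul_assoc]

section
variable {q : ℝ} (h0 : 0 < q) (h1 : q < 1)
include h0 h1

lemma key_prod (a b r : ℕ) :
    (∏ i ∈ Finset.range r, qint q (i + 1)) * ∏ i ∈ Finset.range r, qint q (a + b + i + 2)
      ≤ qint q (r + 1) * ((∏ i ∈ Finset.range r, qint q (a + i + 1)) *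
          ∏ i ∈ Finset.range r, qint q (b + i + 1)) := by
  induction r with
  | zero => simp [qint_one h0 h1]
  | succ n ih =>
      have hQ : 0 < (∏ i ∈ Finset.range n, qint q (a + i + 1)) *
          ∏ i ∈ Finset.range n, qint q (b + i + 1) := by
        apply mul_pos <;> exact Finset.prod_pos (fun i _ => qint_pos h0 h1 (by omega))
      have hL : 0 ≤ (∏ i ∈ Finset.range n, qint q (i + 1)) *
          ∏ i ∈ Finset.range n, qint q (a + b + i + 2) := by
        apply mul_nonneg <;> exact Finset.prod_nonneg (fun i _ => qint_nonneg h0 h1 _)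
      simp only [Finset.prod_range_succ]
      -- goal: (P1 * [n+1]) * (P2 * [a+b+n+2]) ≤ [n+2] * ((Qa * [a+n+1]) * (Qb * [b+n+1]))
      have h1' : qint q (n + 1) * qint q (a + b + n + 1) ≤ qint q (a + n + 1) * qint q (b + n + 1) :=
        qint_mul_le h0 h1 (n + 1) (a + b + n + 1) (a + n + 1) (b + n + 1)
          (by omega) (by omega) (by omega)
      have h2' : qint q (n + 1) * qint q (a + b + n + 2) ≤ qint q (n + 2) * qint q (a + b + n + 1) :=
        qint_mul_le h0 h1 (n + 1) (a + b + n + 2) (n + 2) (a + b + n + 1)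
          (by omega) (by omega) (by omega)
      have hp1 : 0 < qint q (n + 1) := qint_pos h0 h1 (by omega)
      have hp2 : 0 < qint q (n + 2) := qint_pos h0 h1 (by omega)
      have hp3 : 0 ≤ qint q (a + b + n + 1) := qint_nonneg h0 h1 _
      have hp4 : 0 ≤ qint q (a + b + n + 2) := qint_nonneg h0 h1 _
      have hp5 : 0 ≤ qint q (a + n + 1) := qint_nonneg h0 h1 _
      have hp6 : 0 ≤ qint q (b + n + 1) := qint_nonneg h0 h1 _
      have step : qint q (n + 1) * (qint q (n + 1) * qint q (a + b + n + 2))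
          ≤ qint q (n + 2) * (qint q (a + n + 1) * qint q (b + n + 1)) := by
        nlinarith
      nlinarith [mul_le_mul_of_nonneg_right ih (mul_nonneg hp1.le hp4),
        mul_le_mul_of_nonneg_left step hQ.le]
end


theorem theta_positive_and_lower_bound (q : ℝ) (h0 : 0 < q) (h1 : q < 1)
    (k l m r : ℕ) (hr : r ≤ min l m) (hk : k + 2 * r = l + m) :
    0 < qtheta q k l m r ∧
      1 ≤ qint q (r + 1) * qint q (k + 1) / qtheta q k l m r := by
  obtain ⟨a, rfl⟩ : ∃ a, l = a + r := ⟨l - r, by omega⟩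
  obtain ⟨b, rfl⟩ : ∃ b, m = b + r := ⟨m - r, by omega⟩
  obtain rfl : k = a + b := by omega
  have hfp : ∀ n : ℕ, 0 < qfact q n := qfact_pos h0 h1
  have hth : qtheta q (a + b) (a + r) (b + r) r =
      (qfact q r * qfact q a * qfact q b * qfact q (a + b + r + 1)) /
        (qfact q (a + r) * qfact q (b + r) * qfact q (a + b)) := by
    simp [qtheta, Nat.add_sub_cancel]
  have hD : 0 < qfact q (a + r) * qfact q (b + r) * qfact q (a + b) := by
    exact mul_pos (mul_pos (hfp _) (hfp _)) (hfp _)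
  have hθ : 0 < qtheta q (a + b) (a + r) (b + r) r := by
    rw [hth]
    apply div_pos _ hD
    exact mul_pos (mul_pos (mul_pos (hfp _) (hfp _)) (hfp _)) (hfp _)
  refine ⟨hθ, ?_⟩
  rw [one_le_div hθ, hth, div_le_iff₀ hD]
  set Pr := ∏ i ∈ Finset.range r, qint q (i + 1) with hPr
  set Pa := ∏ i ∈ Finset.range r, qint q (a + i + 1) with hPa
  set Pb := ∏ i ∈ Finset.range r, qint q (b + i + 1) with hPb
  set Pk := ∏ i ∈ Finset.range r, qint q (a + b + i + 2) with hPk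
  have eR : qfact q r = Pr := rfl
  have eA : qfact q (a + r) = qfact q a * Pa := qfact_add q a r
  have eB : qfact q (b + r) = qfact q b * Pb := qfact_add q b r
  have eK : qfact q (a + b + r + 1) = qfact q (a + b) * qint q (a + b + 1) * Pk := by
    have h : a + b + r + 1 = (a + b + 1) + r := by omega
    rw [h, qfact_add, qfact_succ]
    congr 1
    rw [hPk]
    exact Finset.prod_congr rfl (fun i _ => by congr 1; omega)
  rw [eR, eA, eB, eK]
  have key := key_prod h0 h1 a b r
  have hc : (0:ℝ) ≤ qfact q a * qfact q b * qfact q (a + b) * qint q (a + b + 1) :=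
    le_of_lt (mul_pos (mul_pos (mul_pos (hfp _) (hfp _)) (hfp _)) (qint_pos h0 h1 (by omega)))
  calc Pr * qfact q a * qfact q b * (qfact q (a + b) * qint q (a + b + 1) * Pk)
      = (qfact q a * qfact q b * qfact q (a + b) * qint q (a + b + 1)) * (Pr * Pk) := by ring
    _ ≤ (qfact q a * qfact q b * qfact q (a + b) * qint q (a + b + 1)) *
          (qint q (r + 1) * (Pa * Pb)) := mul_le_mul_of_nonneg_left key hc
    _ = qint q (r + 1) * qint q (a + b + 1) *
          (qfact q a * Pa * (qfact q b * Pb) * qfact q (a + b)) := by ring
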